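/- Substitution of a bag into a bag is symmetric in the bag elements: for a bag [s_1,...,s_n] and bag b, the sum over all n-partitionings b ◁ b1*...*bn of the bag [s_1⟨b1/x⟩,...,s_n⟨bn/x⟩] is independent of the chosen enumeration ⟨s_1,...,s_n⟩ of the bag. -/
import Mathlib



inductive RTerm : Type
  | var : ℕ → RTerm
  | lam : ℕ → RTerm → RTerm
  | app : RTerm → List RTerm → RTerm

def sel (b : List RTerm) (p : Fin b.length → Fin 2) (i : Fin 2) : List RTerm :=
  ((List.finRange b.length).filter (fun j => p j = i)).map b.get

mutual
def subst : RTerm → ℕ → List RTerm → Multiset RTerm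
  | .var y, x, b =>
      if y = x then (match b with | [u] => {u} | _ => 0)
      else if b.isEmpty then {RTerm.var y} else 0
  | .lam z t, x, b => (subst t x b).map (RTerm.lam z)
  | .app t c, x, b =>
      ∑ p : Fin b.length → Fin 2,
        (subst t x (sel b p 0)).bind (fun t' =>
          (substBag c x (sel b p 1)).map (fun c' => RTerm.app t' c'))
termination_by t _ _ => sizeOf t

def substBag : List RTerm → ℕ → List RTerm → Multiset (List RTerm)
  | [], _, b => if b.isEmpty then {[]} else 0
  | s :: c, x, b =>
      ∑ p : Fin b.length → Fin 2,
        (subst s x (sel b p 0)).bind (fun s' =>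
          (substBag c x (sel b p 1)).map (fun c' => s' :: c'))
termination_by c _ _ => sizeOf c
end

/-- The sublist of `b` selected by the positions the `k`-partitioning `p` sends to `i`. -/
def selN (b : List RTerm) {k : ℕ} (p : Fin b.length → Fin k) (i : Fin k) : List RTerm :=
  ((List.finRange b.length).filter (fun j => p j = i)).map b.get

/-- The product of a list of formal sums of terms, as a formal sum of bags:
choosing one summand in each component. -/
def listProd : List (Multiset RTerm) → Multiset (Multiset RTerm) :=
  fun L => L.foldr (fun m acc => m.bind (fun t => acc.map (fun bag => t ::ₘ bag))) {0}

/-- The substitution of the bag enumerated by `s` by the bag `b`: the sum over all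
`|s|`-partitionings `b ◁ b₁ * ⋯ * bₙ` of the bag `[s₁⟨b₁/x⟩, …, sₙ⟨bₙ/x⟩]`. -/
def bagSubstN (s : List RTerm) (x : ℕ) (b : List RTerm) : Multiset (Multiset RTerm) :=
  ∑ p : Fin b.length → Fin s.length,
    listProd ((List.finRange s.length).map (fun i => subst (s.get i) x (selN b p i)))


lemma listProd_perm {L L' : List (Multiset RTerm)} (h : L.Perm L') :
    listProd L = listProd L' := by
  induction h with
  | nil => rfl
  | cons a _ ih => unfold listProd at *; simp only [List.foldr, ih]
  | swap m m' L =>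
      show Multiset.bind m'
          (fun t => (m.bind (fun u => (listProd L).map (fun bag => u ::ₘ bag))).map
            (fun bag => t ::ₘ bag))
        = Multiset.bind m
          (fun t => (m'.bind (fun u => (listProd L).map (fun bag => u ::ₘ bag))).map
            (fun bag => t ::ₘ bag))
      generalize listProd L = A
      simp only [Multiset.map_bind, Multiset.map_map, Function.comp]
      rw [Multiset.bind_bind]
      simp only [Multiset.cons_swap]
  | trans _ _ ih1 ih2 => rw [ih1, ih2]

lemma perm_exists_equiv {α : Type*} : ∀ {l l' : List α}, l.Perm l' →
    ∃ σ : Fin l'.length ≃ Fin l.length, ∀ i, l'.get i = l.get (σ i) := by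
  intro l l' h
  induction h with
  | nil => exact ⟨Equiv.refl _, fun i => i.elim0⟩
  | cons a _ ih =>
      obtain ⟨σ, hσ⟩ := ih
      refine ⟨(finSuccEquiv _).trans (σ.optionCongr.trans (finSuccEquiv _).symm), fun i => ?_⟩
      refine Fin.cases ?_ (fun j => ?_) i
      · simp
      · simpa using hσ j
  | swap x y L =>
      refine ⟨Equiv.swap ⟨0, by simp⟩ ⟨1, by simp⟩, fun i => ?_⟩
      refine Fin.cases ?_ (fun j => ?_) i
      · simp [Equiv.swap_apply_def, Fin.ext_iff]
      · refine Fin.cases ?_ (fun k => ?_) j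
        · simp [Equiv.swap_apply_def, Fin.ext_iff]
        · simp [Equiv.swap_apply_def, Fin.ext_iff]
  | trans _ _ ih1 ih2 =>
      obtain ⟨σ1, h1⟩ := ih1
      obtain ⟨σ2, h2⟩ := ih2
      exact ⟨σ2.trans σ1, fun i => by rw [h2 i, h1 (σ2 i)]; rfl⟩

/-- substitution of a bag into a bag is symmetric in the bag elements:
the sum over all `n`-partitionings `b ◁ b₁ * ⋯ * bₙ` of the bag
`[s₁⟨b₁/x⟩, …, sₙ⟨bₙ/x⟩]` does not depend on the chosen enumeration
`⟨s₁, …, sₙ⟩` of the bag. -/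
theorem bagSubst_perm_invariant (s s' : List RTerm) (h : s.Perm s') (x : ℕ)
    (b : List RTerm) :
    bagSubstN s x b = bagSubstN s' x b := by
  obtain ⟨σ, hσ⟩ := perm_exists_equiv h
  unfold bagSubstN
  refine Fintype.sum_equiv (Equiv.arrowCongr (Equiv.refl (Fin b.length)) σ.symm) _ _
    (fun p => ?_)
  have hsel : ∀ (i : Fin s'.length),
      selN b (fun j => σ.symm (p j)) i = selN b p (σ i) := by
    intro i
    unfold selN
    congr 1
    apply List.filter_congr
    intro j _
    simp [Equiv.symm_apply_eq]
  have hfr : ((List.finRange s'.length).map σ).Perm (List.finRange s.length) := by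
    rw [List.perm_ext_iff_of_nodup ((List.nodup_finRange _).map σ.injective)
      (List.nodup_finRange _)]
    intro i
    simp only [List.mem_map, List.mem_finRange, iff_true]
    exact ⟨σ.symm i, trivial, by simp⟩
  have hlist : (List.finRange s'.length).map
        (fun i => subst (s'.get i) x (selN b ((Equiv.arrowCongr (Equiv.refl _) σ.symm) p) i))
      = ((List.finRange s'.length).map σ).map
        (fun i => subst (s.get i) x (selN b p i)) := by
    rw [List.map_map]
    apply List.map_congr_left
    intro i _
    simp only [Function.comp, Equiv.arrowCongr_apply, Equiv.coe_refl]
    rw [hσ i]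
    congr 1
    exact hsel i
  rw [hlist]
  exact (listProd_perm (hfr.map _)).symm
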